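/- Let E be a real Banach space, P ⊆ E a normal cone with nonempty interior, and (X, d) a complete extended cone b-metric space over P with coefficient function Θ, where d is a continuous functional. Let f : X → X satisfy d(f(x), f(y)) ≤ s·[d(x, f(x)) + d(y, f(y))] + t·d(y, f(x)) for all x, y ∈ X, where s ∈ (0, 1/2) and t ∈ [0, 1). Suppose that for every x₀ ∈ X, the Picard iterates xₙ = fⁿ(x₀) satisfy: there exists c < (1 − s)/s such that for every n₂ ≥ 1 there is M with Θ(x_{n₁}, x_{n₂}, x_{n₁+1}) ≤ c for all n₁ ≥ M (i.e., sup_{n₂ ≥ 1} lim_{n₁→∞} Θ(x_{n₁}, x_{n₂}, x_{n₁+1}) < (1 − s)/s). Then f has a unique fixed point u ∈ X, and for each x ∈ X the sequence (fⁿ(x)) converges to u. -/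

import Mathlib

/-!
The contractive condition controls the Picard orbit `xₙ = fⁿ x₀`: with
`δₙ = d(xₙ, xₙ₊₁)` it gives `δₙ₊₁ ≤ r δₙ` for `r = s/(1-s) < 1`, and applied to the pair
`(x_q, x_m)` it gives `d(x_{q+1}, x_{m+1}) ≤ s(δ_q + δ_m) + t d(x_{q+1}, x_m)`, so that by induction
on `m` every `d(xₙ, xₘ)` with `n, m > p` is bounded by `C rᵖ δ₀`, where `C = 2s/(1-t)` solves
`2s + tC = C`. Normality turns this into a norm estimate, so the orbit is Cauchy and converges to
some `l`. Continuity of `d` lets one pass to the limit in the contractive inequality for `(xₙ, l)`,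
giving `d(l, fl) ≤ s d(l, fl)` in the cone, hence `fl = l`; two fixed points satisfy
`d(u, v) ≤ t d(u, v)`, hence coincide.
-/

open Filter Topology

namespace PointedCone

variable {E : Type*} [AddCommGroup E] [Module ℝ E] {K : PointedCone ℝ E}

def ofNonnegCombinations (P : Set E) (hP_ne : P.Nonempty)
    (hP_conv : ∀ (a b : ℝ), 0 ≤ a → 0 ≤ b → ∀ x ∈ P, ∀ y ∈ P, a • x + b • y ∈ P) :
    PointedCone ℝ E where
  carrier := P
  add_mem' ha hb := by simpa using hP_conv 1 1 zero_le_one zero_le_one _ ha _ hb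
  zero_mem' := by
    obtain ⟨x, hx⟩ := hP_ne
    simpa using hP_conv 0 0 le_rfl le_rfl x hx x hx
  smul_mem' c x hx := by simpa using hP_conv c 0 c.2 le_rfl x hx x hx

lemma sub_mem_trans {a b c : E} (hab : b - a ∈ K) (hbc : c - b ∈ K) : c - a ∈ K := by
  simpa using K.add_mem hbc hab

lemma smul_sub_smul_mem {a b : ℝ} {v : E} (hab : a ≤ b) (hv : v ∈ K) : b • v - a • v ∈ K := by
  rw [← sub_smul]
  exact K.smul_mem (sub_nonneg.2 hab) hv

lemma pow_smul_sub_mem {r : ℝ} (hr : 0 ≤ r) {a : ℕ → E} (h : ∀ n, r • a n - a (n + 1) ∈ K) :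
    ∀ n, r ^ n • a 0 - a n ∈ K
  | 0 => by simp
  | n + 1 => by
    convert K.add_mem (K.smul_mem hr (pow_smul_sub_mem hr h n)) (h n) using 1
    module

lemma eq_zero_of_smul_sub_mem (hK : ∀ x ∈ K, -x ∈ K → x = 0) {c : ℝ} (hc : c < 1) {x : E}
    (hx : x ∈ K) (h : c • x - x ∈ K) : x = 0 := by
  have hpos : (1 - c) • x ∈ K := K.smul_mem (sub_pos.2 hc).le hx
  have hneg : -((1 - c) • x) ∈ K := by
    convert h using 1
    module
  exact (smul_eq_zero.1 (hK _ hpos hneg)).resolve_left (sub_pos.2 hc).ne'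

end PointedCone

section ConeConvergence

variable {E X : Type*} [NormedAddCommGroup E]

-- `u - v ∈ interior S` encodes `v ≪ u`.
def ConeTendsto (S : Set E) (d : X → X → E) (x : ℕ → X) (a : X) : Prop :=
  ∀ u ∈ interior S, ∃ M : ℕ, ∀ n ≥ M, u - d (x n) a ∈ interior S

def ConeCauchySeq (S : Set E) (d : X → X → E) (x : ℕ → X) : Prop :=
  ∀ u ∈ interior S, ∃ M : ℕ, ∀ n ≥ M, ∀ m ≥ M, u - d (x n) (x m) ∈ interior S

variable {S : Set E} {d : X → X → E}

lemma coneTendsto_const (hd : ∀ x, d x x = 0) (a : X) : ConeTendsto S d (fun _ => a) a :=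
  fun u hu => ⟨0, fun _ _ => by simpa [hd] using hu⟩

lemma ConeTendsto.comp_succ {x : ℕ → X} {a : X} (h : ConeTendsto S d x a) :
    ConeTendsto S d (fun n => x (n + 1)) a := fun u hu => by
  obtain ⟨M, hM⟩ := h u hu
  exact ⟨M, fun n hn => hM (n + 1) (by omega)⟩

lemma coneCauchySeq_of_norm_le {x : ℕ → X} {b : ℕ → ℝ} (hb : Tendsto b atTop (𝓝 0))
    (h : ∀ p n m, p < n → p < m → ‖d (x n) (x m)‖ ≤ b p) : ConeCauchySeq S d x := by
  intro u hu
  have hnear : ∀ᶠ v in 𝓝 0, u - v ∈ interior S :=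
    ((continuous_const.sub continuous_id).tendsto' 0 u (sub_zero u)).eventually
      (isOpen_interior.mem_nhds hu)
  obtain ⟨ε, hε, hball⟩ := Metric.eventually_nhds_iff.1 hnear
  obtain ⟨p, hp⟩ := (hb.eventually (gt_mem_nhds hε)).exists
  refine ⟨p + 1, fun n hn m hm => hball ?_⟩
  rw [dist_zero_right]
  exact (h p n m hn hm).trans_lt hp

end ConeConvergence

section ConeSemimetric

variable {E X : Type*} [NormedAddCommGroup E] [NormedSpace ℝ E]

structure IsConeSemimetric (K : PointedCone ℝ E) (d : X → X → E) : Prop where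
  nonneg : ∀ x y, d x y ∈ K
  eq_zero_iff : ∀ x y, d x y = 0 ↔ x = y
  symm : ∀ x y, d x y = d y x

lemma IsConeSemimetric.self_eq_zero {K : PointedCone ℝ E} {d : X → X → E}
    (hd : IsConeSemimetric K d) (x : X) : d x x = 0 :=
  (hd.eq_zero_iff x x).2 rfl

def IsKannanType (K : PointedCone ℝ E) (d : X → X → E) (f : X → X) (s t : ℝ) : Prop :=
  ∀ x y, s • (d x (f x) + d y (f y)) + t • d y (f x) - d (f x) (f y) ∈ K

namespace IsKannanType

variable {K : PointedCone ℝ E} {d : X → X → E} {f : X → X} {s t : ℝ}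

lemma dist_map_succ_le (hf : IsKannanType K d f s t) (hd : IsConeSemimetric K d) (hs : s < 1)
    (x : X) : (s / (1 - s)) • d x (f x) - d (f x) (f (f x)) ∈ K := by
  have h := hf x (f x)
  rw [hd.self_eq_zero, smul_zero, add_zero] at h
  rw [← K.smul_mem_iff (sub_pos.2 hs)]
  convert h using 1
  have : 1 - s ≠ 0 := (sub_pos.2 hs).ne'
  match_scalars
  · field_simp
  · ring

lemma dist_iterate_succ_le (hf : IsKannanType K d f s t) (hd : IsConeSemimetric K d)
    (hs0 : 0 ≤ s) (hs : s < 1) (x₀ : X) (n : ℕ) :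
    (s / (1 - s)) ^ n • d x₀ (f x₀) - d (f^[n] x₀) (f^[n + 1] x₀) ∈ K :=
  PointedCone.pow_smul_sub_mem (div_nonneg hs0 (sub_nonneg.2 hs.le))
    (a := fun n => d (f^[n] x₀) (f^[n + 1] x₀))
    (fun n => by simpa [Function.iterate_succ_apply'] using hf.dist_map_succ_le hd hs (f^[n] x₀)) n

lemma dist_iterate_le_of_lt (hf : IsKannanType K d f s t) (hd : IsConeSemimetric K d)
    (hs0 : 0 ≤ s) (ht0 : 0 ≤ t) {r C : ℝ} (hr0 : 0 ≤ r) (hr1 : r ≤ 1) (hC0 : 0 ≤ C)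
    (hC : 2 * s + t * C ≤ C) {x₀ : X}
    (hδ : ∀ n, r ^ n • d x₀ (f x₀) - d (f^[n] x₀) (f^[n + 1] x₀) ∈ K) {q m : ℕ} (hqm : q < m) :
    (C * r ^ q) • d x₀ (f x₀) - d (f^[q + 1] x₀) (f^[m] x₀) ∈ K := by
  induction m, Nat.succ_le_of_lt hqm using Nat.le_induction with
  | base =>
    rw [hd.self_eq_zero, sub_zero]
    exact K.smul_mem (by positivity) (hd.nonneg _ _)
  | succ m hqm ih =>
    have hstep : s • (d (f^[q] x₀) (f^[q + 1] x₀) + d (f^[m] x₀) (f^[m + 1] x₀))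
        + t • d (f^[q + 1] x₀) (f^[m] x₀) - d (f^[q + 1] x₀) (f^[m + 1] x₀) ∈ K := by
      simpa only [Function.iterate_succ_apply', hd.symm (f^[m] x₀) (f (f^[q] x₀))]
        using hf (f^[q] x₀) (f^[m] x₀)
    refine PointedCone.sub_mem_trans hstep ?_
    have hrm : r ^ m ≤ r ^ q := pow_le_pow_of_le_one hr0 hr1 (by omega)
    have hcoeff : 0 ≤ C * r ^ q - (s * r ^ q + s * r ^ m + t * (C * r ^ q)) := by
      linarith [mul_nonneg (sub_nonneg.2 hC) (pow_nonneg hr0 q), mul_nonneg hs0 (sub_nonneg.2 hrm)]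
    have hslack := K.smul_mem hcoeff (hd.nonneg x₀ (f x₀))
    convert K.add_mem (K.add_mem (K.add_mem (K.smul_mem hs0 (hδ q)) (K.smul_mem hs0 (hδ m)))
      (K.smul_mem ht0 (ih (by omega)))) hslack using 1
    module

lemma dist_iterate_le (hf : IsKannanType K d f s t) (hd : IsConeSemimetric K d)
    (hs0 : 0 ≤ s) (ht0 : 0 ≤ t) {r C : ℝ} (hr0 : 0 ≤ r) (hr1 : r ≤ 1) (hC0 : 0 ≤ C)
    (hC : 2 * s + t * C ≤ C) {x₀ : X}
    (hδ : ∀ n, r ^ n • d x₀ (f x₀) - d (f^[n] x₀) (f^[n + 1] x₀) ∈ K) {p n m : ℕ} (hpn : p < n)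
    (hpm : p < m) : (C * r ^ p) • d x₀ (f x₀) - d (f^[n] x₀) (f^[m] x₀) ∈ K := by
  wlog hnm : n ≤ m generalizing n m
  · rw [hd.symm (f^[n] x₀)]
    exact this hpm hpn (le_of_not_ge hnm)
  obtain ⟨q, rfl⟩ : ∃ q, n = q + 1 := ⟨n - 1, by omega⟩
  refine PointedCone.sub_mem_trans
    (hf.dist_iterate_le_of_lt hd hs0 ht0 hr0 hr1 hC0 hC hδ (by omega : q < m)) ?_
  exact PointedCone.smul_sub_smul_mem
    (mul_le_mul_of_nonneg_left (pow_le_pow_of_le_one hr0 hr1 (by omega)) hC0) (hd.nonneg _ _)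

lemma coneCauchySeq_iterate (hf : IsKannanType K d f s t) (hd : IsConeSemimetric K d) {N : ℝ}
    (hN : ∀ a b : E, a ∈ K → b - a ∈ K → ‖a‖ ≤ N * ‖b‖) (hs0 : 0 ≤ s) (hs : s < 1 / 2)
    (ht0 : 0 ≤ t) (ht : t < 1) (x₀ : X) : ConeCauchySeq (K : Set E) d (fun n => f^[n] x₀) := by
  set r := s / (1 - s)
  set C := 2 * s / (1 - t)
  have hr0 : 0 ≤ r := div_nonneg hs0 (by linarith)
  have hr1 : r < 1 := (div_lt_one (by linarith)).2 (by linarith)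
  have hC0 : 0 ≤ C := div_nonneg (by linarith) (by linarith)
  have hC : 2 * s + t * C ≤ C := by
    have : C * (1 - t) = 2 * s := div_mul_cancel₀ _ (by linarith)
    linarith
  have hδ := hf.dist_iterate_succ_le hd hs0 (by linarith) x₀
  have hb : Tendsto (fun p => (C * r ^ p) • d x₀ (f x₀)) atTop (𝓝 0) := by
    simpa using ((tendsto_pow_atTop_nhds_zero_of_lt_one hr0 hr1).const_mul C).smul_const
      (d x₀ (f x₀))
  refine coneCauchySeq_of_norm_le (by simpa using hb.norm.const_mul N) fun p n m hpn hpm => ?_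
  exact hN _ _ (hd.nonneg _ _) (hf.dist_iterate_le hd hs0 ht0 hr0 hr1.le hC0 hC hδ hpn hpm)

lemma isFixedPt_of_coneTendsto_iterate (hf : IsKannanType K d f s t) (hd : IsConeSemimetric K d)
    (hK_closed : IsClosed (K : Set E)) (hK : ∀ x ∈ K, -x ∈ K → x = 0) (hs : s < 1)
    (hcont : ∀ (x y : ℕ → X) (a b : X), ConeTendsto (K : Set E) d x a →
      ConeTendsto (K : Set E) d y b → Tendsto (fun n => d (x n) (y n)) atTop (𝓝 (d a b)))
    {x₀ l : X} (hl : ConeTendsto (K : Set E) d (fun n => f^[n] x₀) l) : f l = l := by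
  have hl' : ConeTendsto (K : Set E) d (fun n => f (f^[n] x₀)) l := by
    simpa only [Function.iterate_succ_apply'] using hl.comp_succ
  have hconst := coneTendsto_const (S := (K : Set E)) hd.self_eq_zero
  have hstep := hcont _ _ _ _ hl hl'
  have hleft := hcont _ _ _ _ (hconst l) hl'
  have hright := hcont _ _ _ _ hl' (hconst (f l))
  have hlim := hK_closed.mem_of_tendsto
    ((((hstep.add tendsto_const_nhds).const_smul s).add (hleft.const_smul t)).sub hright)
    (Eventually.of_forall fun n => hf (f^[n] x₀) l)
  rw [hd.self_eq_zero, zero_add, smul_zero, add_zero] at hlim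
  have hfix : d l (f l) = 0 := PointedCone.eq_zero_of_smul_sub_mem hK hs (hd.nonneg _ _) hlim
  exact ((hd.eq_zero_iff _ _).1 hfix).symm

lemma eq_of_isFixedPt (hf : IsKannanType K d f s t) (hd : IsConeSemimetric K d)
    (hK : ∀ x ∈ K, -x ∈ K → x = 0) (ht : t < 1) {u v : X} (hu : f u = u) (hv : f v = v) :
    u = v := by
  have h := hf u v
  rw [hu, hv, hd.self_eq_zero, hd.self_eq_zero, add_zero, smul_zero, zero_add, hd.symm v u] at h
  exact (hd.eq_zero_iff u v).1 (PointedCone.eq_zero_of_smul_sub_mem hK ht (hd.nonneg u v) h)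

end IsKannanType

end ConeSemimetric

theorem stmt_4_general
    {E : Type*} [NormedAddCommGroup E] [NormedSpace ℝ E]
    {X : Type*} [Nonempty X]
    (P : Set E)
    (hP_ne : P.Nonempty) (hP_closed : IsClosed P)
    (hP_conv : ∀ (a b : ℝ), 0 ≤ a → 0 ≤ b → ∀ x ∈ P, ∀ y ∈ P, a • x + b • y ∈ P)
    (hP_pointed : ∀ x ∈ P, -x ∈ P → x = (0 : E))
    (d : X → X → E)
    (hd_nonneg : ∀ x y, d x y ∈ P)
    (hd_eq_zero : ∀ x y, d x y = 0 ↔ x = y)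
    (hd_symm : ∀ x y, d x y = d y x)
    (hP_normal : ∃ N : ℝ, 0 < N ∧ ∀ a b : E, a ∈ P → b - a ∈ P → ‖a‖ ≤ N * ‖b‖)
    (hd_cont : ∀ (x y : ℕ → X) (a b : X),
        (∀ u ∈ interior P, ∃ M : ℕ, ∀ n ≥ M, u - d (x n) a ∈ interior P) →
        (∀ u ∈ interior P, ∃ M : ℕ, ∀ n ≥ M, u - d (y n) b ∈ interior P) →
        Tendsto (fun n => d (x n) (y n)) atTop (nhds (d a b)))
    (hcomplete : ∀ x : ℕ → X,
        (∀ u ∈ interior P, ∃ M : ℕ, ∀ n ≥ M, ∀ m ≥ M, u - d (x n) (x m) ∈ interior P) →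
        ∃ l : X, ∀ u ∈ interior P, ∃ M : ℕ, ∀ n ≥ M, u - d (x n) l ∈ interior P)
    (f : X → X) (s t : ℝ) (hs0 : 0 < s) (hs1 : s < 1 / 2) (ht0 : 0 ≤ t) (ht1 : t < 1)
    (hf : ∀ x y : X, s • (d x (f x) + d y (f y)) + t • d y (f x) - d (f x) (f y) ∈ P)
 :
    ∃ u : X, f u = u ∧ (∀ v : X, f v = v → v = u) ∧
      ∀ x : X, ∀ w ∈ interior P, ∃ M : ℕ, ∀ n ≥ M, w - d (f^[n] x) u ∈ interior P := by
  obtain ⟨N, -, hN⟩ := hP_normal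
  let K := PointedCone.ofNonnegCombinations P hP_ne hP_conv
  have hd : IsConeSemimetric K d := ⟨hd_nonneg, hd_eq_zero, hd_symm⟩
  have hfK : IsKannanType K d f s t := hf
  have horbit (x₀ : X) : ∃ l, f l = l ∧ ConeTendsto (K : Set E) d (fun n => f^[n] x₀) l := by
    obtain ⟨l, hl⟩ := hcomplete _ (hfK.coneCauchySeq_iterate hd hN hs0.le hs1 ht0 ht1 x₀)
    exact ⟨l, hfK.isFixedPt_of_coneTendsto_iterate hd hP_closed hP_pointed (by linarith) hd_cont hl,
      hl⟩
  obtain ⟨u, hu, -⟩ := horbit (Classical.arbitrary X)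
  have huniq (v : X) (hv : f v = v) : v = u := hfK.eq_of_isFixedPt hd hP_pointed ht1 hv hu
  refine ⟨u, hu, huniq, fun x => ?_⟩
  obtain ⟨l, hl, hconv⟩ := horbit x
  rwa [huniq l hl] at hconv

theorem stmt_4
    {E : Type*} [NormedAddCommGroup E] [NormedSpace ℝ E] [CompleteSpace E]
    {X : Type*} [Nonempty X]
    (P : Set E)
    (hP_ne : P.Nonempty) (hP_closed : IsClosed P) (hP_nontrivial : P ≠ ({0} : Set E))
    (hP_conv : ∀ (a b : ℝ), 0 ≤ a → 0 ≤ b → ∀ x ∈ P, ∀ y ∈ P, a • x + b • y ∈ P)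
    (hP_pointed : ∀ x ∈ P, -x ∈ P → x = (0 : E))
    (hP_int : (interior P).Nonempty)
    (Θ : X → X → X → ℝ) (hΘ : ∀ x y z, 1 ≤ Θ x y z)
    (d : X → X → E)
    (hd_nonneg : ∀ x y, d x y ∈ P)
    (hd_eq_zero : ∀ x y, d x y = 0 ↔ x = y)
    (hd_symm : ∀ x y, d x y = d y x)
    (hd_triangle : ∀ x y z, Θ x y z • (d x y + d y z) - d x z ∈ P)
    (hP_normal : ∃ N : ℝ, 0 < N ∧ ∀ a b : E, a ∈ P → b - a ∈ P → ‖a‖ ≤ N * ‖b‖)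
    (hd_cont : ∀ (x y : ℕ → X) (a b : X),
        (∀ u ∈ interior P, ∃ M : ℕ, ∀ n ≥ M, u - d (x n) a ∈ interior P) →
        (∀ u ∈ interior P, ∃ M : ℕ, ∀ n ≥ M, u - d (y n) b ∈ interior P) →
        Tendsto (fun n => d (x n) (y n)) atTop (nhds (d a b)))
    (hcomplete : ∀ x : ℕ → X,
        (∀ u ∈ interior P, ∃ M : ℕ, ∀ n ≥ M, ∀ m ≥ M, u - d (x n) (x m) ∈ interior P) →
        ∃ l : X, ∀ u ∈ interior P, ∃ M : ℕ, ∀ n ≥ M, u - d (x n) l ∈ interior P)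
    (f : X → X) (s t : ℝ) (hs0 : 0 < s) (hs1 : s < 1 / 2) (ht0 : 0 ≤ t) (ht1 : t < 1)
    (hf : ∀ x y : X, s • (d x (f x) + d y (f y)) + t • d y (f x) - d (f x) (f y) ∈ P)
    (hΘ_bound : ∀ x₀ : X, ∃ c : ℝ, c < (1 - s) / s ∧
        ∀ n₂ ≥ 1, ∃ M : ℕ, ∀ n₁ ≥ M, Θ (f^[n₁] x₀) (f^[n₂] x₀) (f^[n₁ + 1] x₀) ≤ c)
 :
    ∃ u : X, f u = u ∧ (∀ v : X, f v = v → v = u) ∧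
      ∀ x : X, ∀ w ∈ interior P, ∃ M : ℕ, ∀ n ≥ M, w - d (f^[n] x) u ∈ interior P :=
  stmt_4_general P hP_ne hP_closed hP_conv hP_pointed d hd_nonneg hd_eq_zero hd_symm hP_normal
    hd_cont hcomplete f s t hs0 hs1 ht0 ht1 hf
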